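/- For the 4×4 complex matrix F with rows (0, i/2, 0, 0), (-ai/2, 0, 0, 1), (0, 0, 0, ai/2), (0, -1/4, -i/2, 0) and a < 0, the eigenvalues λ of 2F with Im λ > 0 are exactly λ₁ = (-i + i√(1-4a))/2 and λ₂ = (i + i√(1-4a))/2. -/

import Mathlib

open Complex

/-! The characteristic polynomial of `2F` is the even quartic `λ⁴ + (1 - 2a)λ² + a²`, whose roots
are `±λ₁, ±λ₂` with `λ₁ = i(s - 1)/2`, `λ₂ = i(s + 1)/2` and `s = √(1 - 4a)`. For `a < 0` we have
`s > 1`, so exactly `λ₁` and `λ₂` lie in the upper half-plane. -/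

/-- The Hamilton map of the Kramers–Fokker–Planck quadratic symbol
`q(x,v,ξ,η) = η² + v²/4 + i(vξ - a x η)`. -/
noncomputable def KFPHamiltonMap (a : ℝ) : Matrix (Fin 4) (Fin 4) ℂ :=
  !![0, I / 2, 0, 0;
     -(a : ℂ) * I / 2, 0, 0, 1;
     0, 0, 0, (a : ℂ) * I / 2;
     0, -1 / 4, -I / 2, 0]

theorem Matrix.exists_mulVec_eq_smul_iff_det_sub_eq_zero {K n : Type*} [Field K] [Fintype n]
    [DecidableEq n] (A : Matrix n n K) (l : K) :
    (∃ v : n → K, v ≠ 0 ∧ A.mulVec v = l • v) ↔ (A - l • 1).det = 0 := by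
  rw [← Matrix.exists_mulVec_eq_zero_iff]
  refine exists_congr fun v => and_congr_right fun _ => ?_
  rw [Matrix.sub_mulVec, Matrix.smul_mulVec, Matrix.one_mulVec, sub_eq_zero]

theorem det_two_smul_KFPHamiltonMap_sub (a : ℝ) (l : ℂ) :
    ((2 : ℂ) • KFPHamiltonMap a - l • 1).det = l ^ 4 + (1 - 2 * a) * l ^ 2 + a ^ 2 := by
  simp [KFPHamiltonMap, Matrix.det_succ_row_zero, Fin.sum_univ_succ, Matrix.one_apply,
    Fin.succAbove]
  linear_combination (2 * l ^ 2 * a + a ^ 2 * (I ^ 2 - 1)) * I_sq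

theorem biquadratic_eq_zero_iff {a s l : ℂ} (hs : s ^ 2 = 1 - 4 * a) :
    l ^ 4 + (1 - 2 * a) * l ^ 2 + a ^ 2 = 0 ↔
      l = (-I + I * s) / 2 ∨ l = -((-I + I * s) / 2) ∨
        l = (I + I * s) / 2 ∨ l = -((I + I * s) / 2) := by
  have hfactor : l ^ 4 + (1 - 2 * a) * l ^ 2 + a ^ 2 =
      (l - (-I + I * s) / 2) * (l + (-I + I * s) / 2) *
        ((l - (I + I * s) / 2) * (l + (I + I * s) / 2)) := by
    ring_nf
    simp only [I_sq, I_pow_four]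
    linear_combination (-(s ^ 2) / 16 - l ^ 2 / 2 + 1 / 16 + a / 4) * hs
  rw [hfactor]
  simp only [mul_eq_zero, sub_eq_zero, add_eq_zero_iff_eq_neg, or_assoc]

theorem eq_or_eq_neg_and_im_pos_iff {s : ℝ} (hs : 1 < s) (l : ℂ) :
    ((l = (-I + I * s) / 2 ∨ l = -((-I + I * s) / 2) ∨
        l = (I + I * s) / 2 ∨ l = -((I + I * s) / 2)) ∧ 0 < l.im) ↔
      l = (-I + I * s) / 2 ∨ l = (I + I * s) / 2 := by
  constructor
  · rintro ⟨h | h | h | h, him⟩ <;> subst h <;> simp at him ⊢ <;> linarith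
  · rintro (h | h) <;> subst h <;> simp <;> linarith

/-- For `a < 0`, the eigenvalues `λ` of `2F` with `Im λ > 0` are exactly
`λ₁ = (-i + i√(1-4a))/2` and `λ₂ = (i + i√(1-4a))/2`. -/
theorem KFP_eigenvalues_im_pos (a : ℝ) (ha : a < 0) :
    {l : ℂ | (∃ v : Fin 4 → ℂ, v ≠ 0 ∧ ((2 : ℂ) • KFPHamiltonMap a).mulVec v = l • v) ∧
        0 < l.im} =
      {(-I + I * (Real.sqrt (1 - 4 * a) : ℂ)) / 2,
       (I + I * (Real.sqrt (1 - 4 * a) : ℂ)) / 2} := by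
  have h14a : (0 : ℝ) ≤ 1 - 4 * a := by linarith
  have hs1 : 1 < Real.sqrt (1 - 4 * a) := by
    rw [Real.lt_sqrt zero_le_one]
    linarith
  have hsq : (Real.sqrt (1 - 4 * a) : ℂ) ^ 2 = 1 - 4 * a := by
    exact_mod_cast Real.sq_sqrt h14a
  ext l
  simp only [Set.mem_ofPred_eq, Set.mem_insert_iff, Set.mem_singleton_iff,
    Matrix.exists_mulVec_eq_smul_iff_det_sub_eq_zero, det_two_smul_KFPHamiltonMap_sub,
    biquadratic_eq_zero_iff hsq]
  exact eq_or_eq_neg_and_im_pos_iff hs1 l
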